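/- arXiv:1712.02921 — 2 statements merged into one kernel-verified Lean document; each statement's English description precedes it below -/
import Mathlib

section
/- The function x(t) = 1/(1+t) + sin(t) + 1 on [0,∞) satisfies: (a) x(t) > 0 for all t ≥ 0; (b) for every ε > 0 there exists t ≥ 0 with x(t) < ε (i.e., inf x = 0, so no positive lower bound exists); and (c) x does not tend to 0 as t → ∞. -/
open Filter Real

theorem counterexample_positive_no_lower_bound_not_tendsto_zero :
    (∀ t : ℝ, 0 ≤ t → 0 < 1 / (1 + t) + Real.sin t + 1) ∧
    (∀ ε : ℝ, 0 < ε → ∃ t : ℝ, 0 ≤ t ∧ 1 / (1 + t) + Real.sin t + 1 < ε) ∧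
    ¬ Tendsto (fun t : ℝ => 1 / (1 + t) + Real.sin t + 1) atTop (nhds 0) := by
  have hπ := Real.pi_pos
  have hπ3 := Real.pi_gt_three
  refine ⟨?_, ?_, ?_⟩
  · intro t ht
    have h1 : (0:ℝ) < 1 / (1 + t) := by positivity
    have h2 : -1 ≤ Real.sin t := Real.neg_one_le_sin t
    linarith
  · intro ε hε
    obtain ⟨n, hn⟩ := exists_nat_gt (1 / ε)
    refine ⟨3 * π / 2 + 2 * π * n, by positivity, ?_⟩
    have hsin : Real.sin (3 * π / 2 + 2 * π * n) = -1 := by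
      rw [show (3 * π / 2 + 2 * π * n : ℝ) = π + π / 2 + n * (2 * π) by ring,
        Real.sin_add_nat_mul_two_pi]
      simp [Real.sin_add]
    have hnn : (0:ℝ) ≤ n := Nat.cast_nonneg n
    have hge : (n:ℝ) ≤ 3 * π / 2 + 2 * π * n := by nlinarith
    have h1 : 1 / ε < 1 + (3 * π / 2 + 2 * π * n) := by linarith
    have h2 : 1 / (1 + (3 * π / 2 + 2 * π * n)) < ε := by
      rw [div_lt_iff₀ (by linarith)]
      rw [div_lt_iff₀ hε] at h1
      nlinarith
    linarith [hsin]
  · intro h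
    have := h.eventually (eventually_lt_nhds (by norm_num : (0:ℝ) < 1))
    rw [eventually_atTop] at this
    obtain ⟨T, hT⟩ := this
    obtain ⟨n, hn⟩ := exists_nat_gt T
    have hnn : (0:ℝ) ≤ n := Nat.cast_nonneg n
    have hge : T ≤ π / 2 + 2 * π * n := by nlinarith
    have hsin : Real.sin (π / 2 + 2 * π * n) = 1 := by
      rw [show (π / 2 + 2 * π * n : ℝ) = π / 2 + n * (2 * π) by ring,
        Real.sin_add_nat_mul_two_pi, Real.sin_pi_div_two]
    have := hT _ hge
    simp only [hsin] at this
    have h1 : (0:ℝ) < 1 / (1 + (π / 2 + 2 * π * n)) := by positivity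
    linarith
end

section
/- Let u : [0,T] → ℝ^d be continuous, let V : ℝ^d → ℝ be convex and differentiable, and fix t ∈ (0,T] and α ∈ (0,1). If the integral ∫₀ᵗ (u(t) − u(τ))/(t−τ)^{α+1} dτ converges absolutely, then ∫₀ᵗ (V(u(t)) − V(u(τ)))/(t−τ)^{α+1} dτ ≤ ∫₀ᵗ ⟨∇V(u(t)), u(t) − u(τ)⟩/(t−τ)^{α+1} dτ, where the left integrand is dominated above by the right integrand pointwise. -/
/-
For convex differentiable `V` the tangent-plane inequality `V x - V y ≤ ⟪∇V x, x - y⟫` holds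
pointwise, so after dividing by the positive kernel `(t - τ) ^ (α + 1)` the claim is monotonicity
of the integral. Both integrands are dominated by a multiple of `‖u t - u τ‖ / (t - τ) ^ (α + 1)`,
which is integrable by hypothesis: the right one by Cauchy–Schwarz, the left one because a convex
function on `ℝ^d` is locally Lipschitz, hence Lipschitz on the compact set `u '' [0, T]`.
-/

open RealInnerProductSpace MeasureTheory Set

theorem ConvexOn.sub_le_of_hasFDerivAt {E : Type*} [NormedAddCommGroup E] [NormedSpace ℝ E]
    {S : Set E} {f : E → ℝ} {f' : E →L[ℝ] ℝ} {x y : E} (hf : ConvexOn ℝ S f) (hx : x ∈ S)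
    (hy : y ∈ S) (hf' : HasFDerivAt f f' x) : f x - f y ≤ f' (x - y) := by
  set g : ℝ →ᵃ[ℝ] E := AffineMap.lineMap y x
  have hderiv : HasDerivAt (f ∘ g) (f' (x - y)) 1 := by
    have hg : HasDerivAt g (x - y) 1 := AffineMap.hasDerivAt_lineMap
    exact (by simpa [g] using hf' : HasFDerivAt f f' (g 1)).comp_hasDerivAt 1 hg
  simpa [slope, g] using (hf.comp_affineMap g).slope_le_of_hasDerivAt
    (by simpa [g] using hy) (by simpa [g] using hx) one_pos hderiv

theorem ConvexOn.sub_le_inner_gradient {E : Type*} [NormedAddCommGroup E]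
    [InnerProductSpace ℝ E] [CompleteSpace E] {S : Set E} {f : E → ℝ} {x y : E}
    (hf : ConvexOn ℝ S f) (hx : x ∈ S) (hy : y ∈ S) (hfx : DifferentiableAt ℝ f x) :
    f x - f y ≤ ⟪gradient f x, x - y⟫ := by
  simpa using hf.sub_le_of_hasFDerivAt hx hy hfx.hasGradientAt.hasFDerivAt

theorem integrableOn_div_of_abs_le_mul {X : Type*} [MeasurableSpace X] {μ : Measure X}
    {s : Set X} (hs : MeasurableSet s) {φ ψ k : X → ℝ} {C : ℝ}
    (hψ : IntegrableOn (fun x => ψ x / k x) s μ) (hφ : AEStronglyMeasurable φ (μ.restrict s))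
    (hk : Measurable k) (hk_nonneg : ∀ x ∈ s, 0 ≤ k x) (hbound : ∀ x ∈ s, |φ x| ≤ C * ψ x) :
    IntegrableOn (fun x => φ x / k x) s μ := by
  refine Integrable.mono' (hψ.const_mul C)
    (hφ.aemeasurable.div hk.aemeasurable).aestronglyMeasurable ?_
  filter_upwards [ae_restrict_mem hs] with x hx
  rw [Real.norm_eq_abs, abs_div, abs_of_nonneg (hk_nonneg x hx), mul_div_assoc']
  exact div_le_div_of_nonneg_right (hbound x hx) (hk_nonneg x hx)

theorem integral_gradient_ineq_general (d : ℕ) (α T t : ℝ)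
    (ht : t ∈ Set.Ioc (0:ℝ) T)
    (u : ℝ → EuclideanSpace ℝ (Fin d)) (hu : ContinuousOn u (Set.Icc 0 T))
    (V : EuclideanSpace ℝ (Fin d) → ℝ)
    (hconv : ConvexOn ℝ Set.univ V) (hdiff : Differentiable ℝ V)
    (hint : IntegrableOn (fun τ => ‖u t - u τ‖ / (t - τ) ^ (α + 1)) (Set.Ioo 0 t)) :
    (∫ τ in Set.Ioo 0 t, (V (u t) - V (u τ)) / (t - τ) ^ (α + 1)) ≤
      ∫ τ in Set.Ioo 0 t, ⟪gradient V (u t), u t - u τ⟫ / (t - τ) ^ (α + 1) := by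
  have hsub : Ioo 0 t ⊆ Icc 0 T := fun τ hτ => ⟨hτ.1.le, hτ.2.le.trans ht.2⟩
  have hu_meas : AEStronglyMeasurable u (volume.restrict (Ioo 0 t)) :=
    (hu.mono hsub).aestronglyMeasurable measurableSet_Ioo
  have hk : Measurable fun τ : ℝ => (t - τ) ^ (α + 1) := by fun_prop
  have hk_nonneg : ∀ τ ∈ Ioo 0 t, 0 ≤ (t - τ) ^ (α + 1) :=
    fun τ hτ => Real.rpow_nonneg (sub_nonneg.2 hτ.2.le) _
  obtain ⟨L, hL⟩ := hconv.locallyLipschitz.locallyLipschitzOn.exists_lipschitzOnWith_of_compact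
    (isCompact_Icc.image_of_continuousOn hu)
  have hV_lip : ∀ τ ∈ Ioo 0 t, |V (u t) - V (u τ)| ≤ L * ‖u t - u τ‖ := fun τ hτ => by
    simpa [Real.dist_eq, dist_eq_norm] using
      hL.dist_le_mul _ (mem_image_of_mem u ⟨ht.1.le, ht.2⟩) _ (mem_image_of_mem u (hsub hτ))
  refine setIntegral_mono_on ?_ ?_ measurableSet_Ioo fun τ hτ =>
    div_le_div_of_nonneg_right (hconv.sub_le_inner_gradient trivial trivial (hdiff _))
      (hk_nonneg τ hτ)
  · have hV : Continuous V := hdiff.continuous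
    exact integrableOn_div_of_abs_le_mul measurableSet_Ioo hint (by fun_prop) hk hk_nonneg hV_lip
  · exact integrableOn_div_of_abs_le_mul measurableSet_Ioo hint (by fun_prop) hk hk_nonneg
      fun τ _ => abs_real_inner_le_norm _ _

theorem integral_gradient_ineq (d : ℕ) (α T t : ℝ) (hα : α ∈ Set.Ioo (0:ℝ) 1)
    (hT : 0 < T) (ht : t ∈ Set.Ioc (0:ℝ) T)
    (u : ℝ → EuclideanSpace ℝ (Fin d)) (hu : ContinuousOn u (Set.Icc 0 T))
    (V : EuclideanSpace ℝ (Fin d) → ℝ)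
    (hconv : ConvexOn ℝ Set.univ V) (hdiff : Differentiable ℝ V)
    (hint : IntegrableOn (fun τ => ‖u t - u τ‖ / (t - τ) ^ (α + 1)) (Set.Ioo 0 t)) :
    (∫ τ in Set.Ioo 0 t, (V (u t) - V (u τ)) / (t - τ) ^ (α + 1)) ≤
      ∫ τ in Set.Ioo 0 t, ⟪gradient V (u t), u t - u τ⟫ / (t - τ) ^ (α + 1) :=
  integral_gradient_ineq_general d α T t ht u hu V hconv hdiff hint
end
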